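/- arXiv:2011.05882 — 2 statements merged into one kernel-verified Lean document; each statement's English description precedes it below -/
import Mathlib

section
/- Let F : ℝⁿ → E be an n-dimensional spectral resolution on the perfect effect algebra E = Γ_ea(ℤ ×ₗ G,(1,0)). Fix 1 ≤ k < n, s̄ ∈ ℝᵏ and t̄ ∈ ℝ^{n−k}, and suppose that for every q̄ ∈ ℝᵏ with q̄ ≪ s̄ the set {F(q̄,r̄) : r̄ ≫ t̄} has a greatest lower bound in E, and that {F(s̄,r̄) : r̄ ≫ t̄} has a greatest lower bound in E. Then ⋀{F(s̄,r̄) : r̄ ≫ t̄} is the least upper bound of the family {⋀{F(q̄,r̄) : r̄ ≫ t̄} : q̄ ≪ s̄}. Consequently, applying to F any sequence of operators Ξ₁,…,Ξₙ, where each Ξᵢ is either the supremum over the i-th argument tending to a prescribed value from below or the infimum over the i-th argument tending to a prescribed value from above, yields the same element of E regardless of the order in which the operators are applied (whenever the infima involved exist). -/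
open Classical

namespace Paper

/-- A po-group is directed. -/
def DirectedPO (G : Type*) [AddCommGroup G] [PartialOrder G] : Prop :=
  ∀ a b : G, ∃ c, a ≤ c ∧ b ≤ c

/-- The Riesz interpolation property for a po-group `G`. -/
def RieszInterp (G : Type*) [AddCommGroup G] [PartialOrder G] : Prop :=
  ∀ a₁ a₂ b₁ b₂ : G, a₁ ≤ b₁ → a₁ ≤ b₂ → a₂ ≤ b₁ → a₂ ≤ b₂ →
    ∃ c, (a₁ ≤ c ∧ a₂ ≤ c) ∧ (c ≤ b₁ ∧ c ≤ b₂)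

/-- Dedekind monotone σ-completeness of a po-group: every ascending sequence bounded above
has a supremum and every descending sequence bounded below has an infimum. -/
def MonSigmaComplete (G : Type*) [AddCommGroup G] [PartialOrder G] : Prop :=
  (∀ f : ℕ → G, Monotone f → BddAbove (Set.range f) → ∃ s, IsLUB (Set.range f) s) ∧
  (∀ f : ℕ → G, Antitone f → BddBelow (Set.range f) → ∃ s, IsGLB (Set.range f) s)

/-- Dedekind σ-completeness: every nonempty countable subset bounded above has a supremum. -/
def DedekindSC (G : Type*) [AddCommGroup G] [PartialOrder G] : Prop :=
  ∀ S : Set G, S.Nonempty → S.Countable → BddAbove S → ∃ s, IsLUB S s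

/-- The interval algebra `Γ(ℤ ×ₗ G,(k,0)) = {a : 0 ≤ a ≤ (k,0)}` in the lexicographic
product `ℤ ×ₗ G`. -/
def Ek (G : Type*) [AddCommGroup G] [PartialOrder G] (k : ℤ) : Set (ℤ ×ₗ G) :=
  Set.Icc 0 (toLex (k, (0 : G)))

/-- The iterated difference `Δ₁(a₁,b₁)⋯Δₙ(aₙ,bₙ)F`, written as the signed sum over all
corners of the box `[a,b)`; the sign is `(-1)^(number of coordinates set to the lower
endpoint)`. -/
def volSum {M : Type*} [AddCommGroup M] {ι : Type*} [Fintype ι] [DecidableEq ι]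
    (F : (ι → ℝ) → M) (a b : ι → ℝ) : M :=
  ∑ S : Finset ι, (-1 : ℤ) ^ (Fintype.card ι - S.card) •
    F (fun i => if i ∈ S then b i else a i)

variable {G : Type*} [AddCommGroup G] [PartialOrder G]
variable {ι : Type*} [Fintype ι] [DecidableEq ι]

/-- An `n`-dimensional pseudo spectral resolution with values in `Ek G k`:
the volume condition, left-continuity, vanishing along each coordinate, and the range
has a least upper bound in `Ek G k`. -/
structure IsPseudoSR (k : ℤ) (F : (ι → ℝ) → ℤ ×ₗ G) : Prop where
  mem : ∀ t, F t ∈ Ek G k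
  vol : ∀ a b : ι → ℝ, (∀ i, a i ≤ b i) → 0 ≤ volSum F a b
  leftCont : ∀ t, IsLUB (F '' {s | ∀ i, s i < t i}) (F t)
  coordZero : ∀ (i : ι) (t : ι → ℝ),
    IsGLB (Set.range fun r => F (Function.update t i r)) 0
  rangeSup : ∃ u ∈ Ek G k, IsLUB (Set.range F) u

/-- An `n`-dimensional spectral resolution on the perfect algebra `Γ(ℤ ×ₗ G,(1,0))`:
the volume condition, left-continuity, vanishing along each coordinate, total mass `(1,0)`,
and the characteristic-point condition (v). -/
structure IsSR1 (F : (ι → ℝ) → ℤ ×ₗ G) : Prop where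
  mem : ∀ t, F t ∈ Ek G 1
  vol : ∀ a b : ι → ℝ, (∀ i, a i ≤ b i) → 0 ≤ volSum F a b
  leftCont : ∀ t, IsLUB (F '' {s | ∀ i, s i < t i}) (F t)
  coordZero : ∀ (i : ι) (t : ι → ℝ),
    IsGLB (Set.range fun r => F (Function.update t i r)) 0
  total : IsLUB (Set.range F) (toLex (1, (0 : G)))
  charPt : ∃ t0 : ι → ℝ,
    (∀ s, (ofLex (F s)).1 = 1 ↔ ∀ i, t0 i < s i) ∧
    ∃ a ∈ Ek G 1, IsGLB (F '' {s | ∀ i, t0 i < s i}) a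

/-- A two-dimensional spectral resolution on the perfect algebra `Γ(ℤ ×ₗ G,(1,0))`. -/
structure IsSR2 (F : ℝ → ℝ → ℤ ×ₗ G) : Prop where
  mem : ∀ s t, F s t ∈ Ek G 1
  vol : ∀ a₁ b₁ a₂ b₂ : ℝ, a₁ ≤ b₁ → a₂ ≤ b₂ →
    0 ≤ F b₁ b₂ - F a₁ b₂ - F b₁ a₂ + F a₁ a₂
  leftCont : ∀ s t : ℝ, IsLUB {y | ∃ s' t' : ℝ, s' < s ∧ t' < t ∧ y = F s' t'} (F s t)
  coordZero₁ : ∀ s : ℝ, IsGLB (Set.range fun t => F s t) 0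
  coordZero₂ : ∀ t : ℝ, IsGLB (Set.range fun s => F s t) 0
  total : IsLUB {y | ∃ s t : ℝ, y = F s t} (toLex (1, (0 : G)))
  charPt : ∃ s₀ t₀ : ℝ,
    (∀ s t, (ofLex (F s t)).1 = 1 ↔ (s₀ < s ∧ t₀ < t)) ∧
    ∃ a ∈ Ek G 1, IsGLB {y | ∃ s t : ℝ, s₀ < s ∧ t₀ < t ∧ y = F s t} a

/-- An observable on `Γ(ℤ ×ₗ G,(k,0))` defined on the Borel (measurable) subsets of `X`. -/
def IsObs {X : Type*} [MeasurableSpace X] (k : ℤ) (x : Set X → ℤ ×ₗ G) : Prop :=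
  (∀ A, MeasurableSet A → x A ∈ Ek G k) ∧
  x Set.univ = toLex (k, (0 : G)) ∧
  (∀ A B : Set X, MeasurableSet A → MeasurableSet B → Disjoint A B →
    x (A ∪ B) = x A + x B) ∧
  (∀ A : ℕ → Set X, (∀ i, MeasurableSet (A i)) → Monotone A →
    IsLUB (Set.range fun i => x (A i)) (x (⋃ i, A i)))

end Paper

/-! The infimum over `r ≫ t` commutes with the supremum over `q ≪ s` because `F` is monotone
and supermodular: for `q ≤ s` and `r ≤ r₁` we have `F(s,r) + F(q,r₁) ≤ F(s,r₁) + F(q,r)`, which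
bounds `M + F(q,r₁)` by `g q + F(s,r₁)`; left-continuity of `F` at `(s,r₁)` then gives `M ≤ u` for
every upper bound `u` of the `g q`.

Supermodularity reduces to the nonnegativity of the two-dimensional differences of `F`. These are
limits of `n`-dimensional volumes as the remaining coordinates tend to `-∞`; exchanging the
finitely many limits with the finite sum is where σ-completeness of `G` and the lexicographic
order enter: an antitone sequence in `ℤ ×ₗ G` with infimum `0` eventually lies in `{0} × G`. -/

open Finset Function Paper

section SigmaComplete

variable {H : Type*} [AddCommGroup H] [PartialOrder H] [IsOrderedAddMonoid H]

theorem isGLB_range_add (hsc : MonSigmaComplete H) {x y : ℕ → H} {a b : H}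
    (hx : Antitone x) (hy : Antitone y) (ha : IsGLB (Set.range x) a)
    (hb : IsGLB (Set.range y) b) : IsGLB (Set.range (x + y)) (a + b) := by
  refine ⟨?_, fun ζ hζ => ?_⟩
  · rintro _ ⟨n, rfl⟩
    exact add_le_add (ha.1 ⟨n, rfl⟩) (hb.1 ⟨n, rfl⟩)
  have hsep : ∀ n m, ζ - x n ≤ y m := fun n m => calc
    ζ - x n ≤ ζ - x (max n m) := sub_le_sub_left (hx (le_max_left n m)) ζ
    _ ≤ y (max n m) := sub_le_iff_le_add'.2 (hζ ⟨max n m, rfl⟩)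
    _ ≤ y m := hy (le_max_right n m)
  -- `w = ⨆ n, (ζ - x n)` separates `ζ - x` from `y`.
  obtain ⟨w, hw⟩ := hsc.1 (fun n => ζ - x n) (fun n m h => sub_le_sub_left (hx h) ζ)
    ⟨y 0, by rintro _ ⟨n, rfl⟩; exact hsep n 0⟩
  have hwb : w ≤ b := hb.2 <| by
    rintro _ ⟨m, rfl⟩; exact hw.2 (by rintro _ ⟨n, rfl⟩; exact hsep n m)
  have hwa : ζ - w ≤ a := ha.2 (by rintro _ ⟨n, rfl⟩; exact sub_le_comm.1 (hw.1 ⟨n, rfl⟩))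
  calc ζ = (ζ - w) + w := (sub_add_cancel ζ w).symm
    _ ≤ a + b := add_le_add hwa hwb

theorem isGLB_range_sum (hsc : MonSigmaComplete H) {σ : Type*} (T : Finset σ)
    {x : σ → ℕ → H} {a : σ → H} (hx : ∀ j ∈ T, Antitone (x j))
    (ha : ∀ j ∈ T, IsGLB (Set.range (x j)) (a j)) :
    IsGLB (Set.range fun n => ∑ j ∈ T, x j n) (∑ j ∈ T, a j) := by
  classical
  induction T using Finset.induction_on with
  | empty => simp [isGLB_singleton]
  | insert j T hj ih =>
    simp only [sum_insert hj]
    exact isGLB_range_add hsc (hx j (mem_insert_self j T))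
      (fun n m h => sum_le_sum fun i hi => hx i (mem_insert_of_mem hi) h)
      (ha j (mem_insert_self j T))
      (ih (fun i hi => hx i (mem_insert_of_mem hi)) (fun i hi => ha i (mem_insert_of_mem hi)))

theorem neg_zsmul_neg_one_pow_le {y : H} (hy : 0 ≤ y) (k : ℕ) : -((-1 : ℤ) ^ k • y) ≤ y := by
  rcases neg_one_pow_eq_or ℤ k with h | h <;> simp [h, neg_le_self hy]

end SigmaComplete

theorem Antitone.isGLB_range_add_iff {α : Type*} [Preorder α] {x : ℕ → α} {a : α}
    (hx : Antitone x) (N : ℕ) :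
    IsGLB (Set.range fun n => x (N + n)) a ↔ IsGLB (Set.range x) a := by
  refine and_congr ⟨fun h => ?_, fun h => ?_⟩ ⟨fun h ζ hζ => h ?_, fun h ζ hζ => h ?_⟩
  · rintro _ ⟨n, rfl⟩; exact (h ⟨n, rfl⟩).trans (hx (Nat.le_add_left n N))
  · rintro _ ⟨n, rfl⟩; exact h ⟨N + n, rfl⟩
  · rintro _ ⟨n, rfl⟩; exact hζ ⟨N + n, rfl⟩
  · rintro _ ⟨n, rfl⟩; exact (hζ ⟨n, rfl⟩).trans (hx (Nat.le_add_left n N))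

theorem isGLB_range_toLex_const_iff {α β : Type*} [Preorder α] [Preorder β] (c : α)
    {g : ℕ → β} {a : β} :
    IsGLB (Set.range fun n => toLex (c, g n)) (toLex (c, a)) ↔ IsGLB (Set.range g) a := by
  have hle : ∀ {γ δ : β}, toLex (c, γ) ≤ toLex (c, δ) ↔ γ ≤ δ := by
    simp [Prod.Lex.toLex_le_toLex]
  simp only [IsGLB, IsGreatest, upperBounds, mem_lowerBounds, Set.forall_mem_range, hle,
    Set.mem_ofPred_eq]
  refine and_congr_right fun _ => ⟨fun h γ hγ => hle.1 (h (hle.2 <| hγ ·)), fun h ζ hζ => ?_⟩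
  obtain ⟨⟨d, γ⟩, rfl⟩ := toLex.surjective ζ
  simp only [Prod.Lex.toLex_le_toLex] at hζ ⊢
  rcases hζ 0 with hd | ⟨rfl, -⟩
  · exact Or.inl hd
  · exact Or.inr ⟨rfl, h fun n => ((hζ n).resolve_left (lt_irrefl _)).2⟩

section Lex

variable {G : Type*} [AddCommGroup G] [PartialOrder G] [IsOrderedAddMonoid G]

/-- Otherwise every `(0, γ)` is a lower bound, which forces `G = 0` and then `(1, 0) ≤ 0`. -/
theorem eventually_fst_ofLex_eq_zero {x : ℕ → ℤ ×ₗ G} (hx : Antitone x)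
    (h0 : IsGLB (Set.range x) 0) : ∀ᶠ n in Filter.atTop, (ofLex (x n)).1 = 0 := by
  have hfst_nonneg : ∀ n, 0 ≤ (ofLex (x n)).1 := fun n =>
    Prod.Lex.monotone_fst_ofLex (h0.1 ⟨n, rfl⟩)
  by_contra hne
  have hpos : ∀ n, 0 < (ofLex (x n)).1 := by
    intro n
    obtain ⟨m, hnm, hm⟩ := Filter.frequently_atTop.1 (Filter.not_eventually.1 hne) n
    exact ((hfst_nonneg m).lt_of_ne' hm).trans_le (Prod.Lex.monotone_fst_ofLex (hx hnm))
  have hG : ∀ γ : G, γ ≤ 0 := fun γ => by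
    have : toLex ((0 : ℤ), γ) ≤ 0 := h0.2 (by
      rintro _ ⟨n, rfl⟩; exact Prod.Lex.le_iff.2 (Or.inl (hpos n)))
    simpa [Prod.Lex.le_iff] using this
  have hG0 : ∀ γ : G, γ = 0 := fun γ => (hG γ).antisymm (neg_nonpos.1 (hG (-γ)))
  have h1 : toLex ((1 : ℤ), (0 : G)) ≤ 0 := h0.2 (by
    rintro _ ⟨n, rfl⟩
    rcases (Int.add_one_le_of_lt (hpos n)).lt_or_eq with h | h
    · exact Prod.Lex.le_iff.2 (Or.inl h)
    · exact Prod.Lex.le_iff.2 (Or.inr ⟨h, (hG0 _).ge⟩))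
  exact absurd (Prod.Lex.monotone_fst_ofLex h1) (by simp)

theorem isGLB_range_sum_lex (hsc : MonSigmaComplete G) {σ : Type*} (T : Finset σ)
    {x : σ → ℕ → ℤ ×ₗ G} (hx : ∀ j ∈ T, Antitone (x j))
    (h0 : ∀ j ∈ T, IsGLB (Set.range (x j)) 0) : IsGLB (Set.range fun n => ∑ j ∈ T, x j n) 0 := by
  obtain ⟨N, hN⟩ := Filter.eventually_atTop.1 <|
    (Filter.eventually_all_finset T).2 fun j hj =>
      eventually_fst_ofLex_eq_zero (hx j hj) (h0 j hj)
  set g : σ → ℕ → G := fun j n => (ofLex (x j (N + n))).2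
  have htail : ∀ j ∈ T, ∀ n, x j (N + n) = toLex (0, g j n) := fun j hj n =>
    congrArg toLex (Prod.ext (hN (N + n) (Nat.le_add_right N n) j hj) rfl)
  have hg : ∀ j ∈ T, Antitone (g j) ∧ IsGLB (Set.range (g j)) 0 := fun j hj => by
    refine ⟨fun n m h => ?_, (isGLB_range_toLex_const_iff (0 : ℤ)).1 ?_⟩
    · have := hx j hj (Nat.add_le_add_left h N)
      rwa [htail j hj, htail j hj, Prod.Lex.toLex_le_toLex, or_iff_right (lt_irrefl 0),
        and_iff_right rfl] at this
    · have := ((hx j hj).isGLB_range_add_iff N).2 (h0 j hj)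
      simp only [htail j hj] at this
      exact this
  have hsum : ∀ n, ∑ j ∈ T, x j (N + n) = toLex (0, ∑ j ∈ T, g j n) := fun n => by
    rw [sum_congr rfl fun j hj => htail j hj n]
    change ∑ j ∈ T, toLexAddEquiv (ℤ × G) (0, g j n) = _
    rw [← map_sum]
    exact congrArg toLex (Prod.ext (by simp [Prod.fst_sum]) (by simp [Prod.snd_sum]))
  have := isGLB_range_sum hsc T (fun j hj => (hg j hj).1) (fun j hj => (hg j hj).2)
  rw [sum_const_zero, ← isGLB_range_toLex_const_iff (0 : ℤ)] at this
  refine (Antitone.isGLB_range_add_iff (fun n m h => sum_le_sum fun j hj => hx j hj h) N).1 ?_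
  simp only [hsum]
  exact this

end Lex

theorem Monotone.isGLB_range_comp_sub_natCast {α : Type*} [Preorder α] {φ : ℝ → α}
    (hφ : Monotone φ) {a : α} (h : IsGLB (Set.range φ) a) (c : ℝ) :
    IsGLB (Set.range fun n : ℕ => φ (c - n)) a := by
  refine ⟨fun _ ⟨n, hn⟩ => hn ▸ h.1 ⟨_, rfl⟩, fun ζ hζ => h.2 ?_⟩
  rintro _ ⟨r, rfl⟩
  obtain ⟨n, hn⟩ := exists_nat_ge (c - r)
  exact (hζ ⟨n, rfl⟩).trans (hφ (by linarith))

section BoxDiff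

variable {ι α M : Type*} [DecidableEq ι] [AddCommGroup M]

/-- The iterated difference `Δ_J(a, b) F` in the coordinates of `J`, the other coordinates taken
from `b`; `T` runs over the sets of coordinates moved down to `a`. -/
def boxDiff (F : (ι → α) → M) (J : Finset ι) (a b : ι → α) : M :=
  ∑ T ∈ J.powerset, (-1 : ℤ) ^ T.card • F (T.piecewise a b)

@[simp]
theorem boxDiff_empty (F : (ι → α) → M) (a b : ι → α) : boxDiff F ∅ a b = F b := by
  simp [boxDiff]

theorem boxDiff_insert (F : (ι → α) → M) {J : Finset ι} {l : ι} (hl : l ∉ J) (a b : ι → α) :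
    boxDiff F (insert l J) a b = boxDiff F J a b - boxDiff F J a (update b l (a l)) := by
  rw [boxDiff, sum_powerset_insert hl, sub_eq_add_neg, boxDiff, boxDiff, ← sum_neg_distrib]
  congr 1
  refine sum_congr rfl fun T hT => ?_
  have hlT : l ∉ T := fun h => hl (mem_powerset.1 hT h)
  rw [card_insert_of_notMem hlT, pow_succ, mul_neg_one, neg_smul, piecewise_insert,
    T.update_piecewise_of_notMem a b hlT]

theorem boxDiff_singleton (F : (ι → α) → M) (j : ι) (a b : ι → α) :
    boxDiff F {j} a b = F b - F (update b j (a j)) := by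
  rw [← insert_empty_eq, boxDiff_insert F (notMem_empty j), boxDiff_empty, boxDiff_empty]

theorem boxDiff_update_left (F : (ι → α) → M) {J : Finset ι} {l : ι} (hl : l ∉ J)
    (a b : ι → α) (c : α) : boxDiff F J (update a l c) b = boxDiff F J a b := by
  refine sum_congr rfl fun T hT => ?_
  congr 2
  exact T.piecewise_congr
    (fun i hi => update_of_ne (ne_of_mem_of_not_mem (mem_powerset.1 hT hi) hl) _ _) fun _ _ => rfl

theorem boxDiff_update_right (F : (ι → α) → M) {J : Finset ι} {l : ι} (hl : l ∉ J)
    (a b : ι → α) (c : α) :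
    boxDiff F J a (update b l c) =
      ∑ T ∈ J.powerset, (-1 : ℤ) ^ T.card • F (update (T.piecewise a b) l c) := by
  refine sum_congr rfl fun T hT => ?_
  rw [T.update_piecewise_of_notMem a b fun h => hl (mem_powerset.1 hT h)]

theorem boxDiff_univ [Fintype ι] (F : (ι → ℝ) → M) (a b : ι → ℝ) :
    boxDiff F univ a b = volSum F a b := by
  rw [boxDiff, powerset_univ]
  refine Fintype.sum_bijective compl compl_involutive.bijective _ _ fun T => ?_
  rw [card_compl, Nat.sub_sub_self (card_le_univ T)]
  congr 2
  ext i
  by_cases hi : i ∈ T <;> simp [hi]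

end BoxDiff

section SpectralResolution

variable {ι G : Type*} [Fintype ι] [DecidableEq ι] [AddCommGroup G] [PartialOrder G]
  [IsOrderedAddMonoid G]

/-- Each lower-dimensional difference is a limit of full-dimensional ones: sending the missing
coordinates to `-∞` kills every corner term, and σ-completeness lets the finitely many limits
be taken at once. -/
theorem boxDiff_nonneg (hsc : MonSigmaComplete G) {F : (ι → ℝ) → ℤ ×ₗ G}
    (hmono : Monotone F) (hzero : ∀ i t, IsGLB (Set.range fun r => F (update t i r)) 0)
    (hvol : ∀ a b : ι → ℝ, (∀ i, a i ≤ b i) → 0 ≤ volSum F a b) (J : Finset ι) :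
    ∀ a b : ι → ℝ, (∀ i ∈ J, a i ≤ b i) → 0 ≤ boxDiff F J a b := by
  refine Finset.strongDownwardInductionOn (n := Fintype.card ι) J (fun J ih _ a b hab => ?_)
    (card_le_univ J)
  by_cases hJ : J = univ
  · subst hJ
    rw [boxDiff_univ]
    exact hvol a b fun i => hab i (mem_univ i)
  obtain ⟨l, hl⟩ : ∃ l, l ∉ J := by simpa [eq_univ_iff_forall] using hJ
  have hdown : ∀ c ≤ b l, boxDiff F J a (update b l c) ≤ boxDiff F J a b := fun c hc => by
    have := ih (card_le_univ _) (ssubset_insert hl) (update a l c) b fun i hi => by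
      rcases eq_or_ne i l with rfl | hil
      · simpa using hc
      · simpa [hil] using hab i ((mem_insert.1 hi).resolve_left hil)
    simpa only [boxDiff_insert F hl, boxDiff_update_left F hl, update_self, sub_nonneg]
      using this
  set y : Finset ι → ℕ → ℤ ×ₗ G := fun T n => F (update (T.piecewise a b) l (b l - n))
  have hy : ∀ T, Antitone (y T) ∧ IsGLB (Set.range (y T)) 0 := fun T =>
    ⟨(hmono.comp update_mono).comp_antitone fun n m h => sub_le_sub_left (Nat.cast_le.2 h) _,
      (hmono.comp update_mono).isGLB_range_comp_sub_natCast (hzero l _) (b l)⟩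
  have hlim := isGLB_range_sum_lex hsc J.powerset (fun T _ => (hy T).1) (fun T _ => (hy T).2)
  refine neg_nonpos.1 (hlim.2 ?_)
  rintro _ ⟨n, rfl⟩
  calc -boxDiff F J a b ≤ -boxDiff F J a (update b l (b l - n)) :=
        neg_le_neg (hdown _ (sub_le_self _ n.cast_nonneg))
    _ = ∑ T ∈ J.powerset, -((-1 : ℤ) ^ T.card • y T n) := by
        rw [boxDiff_update_right F hl, sum_neg_distrib]
    _ ≤ ∑ T ∈ J.powerset, y T n :=
        sum_le_sum fun T _ => neg_zsmul_neg_one_pow_le ((hy T).2.1 ⟨n, rfl⟩) _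

end SpectralResolution

section Supermodular

variable {ι α : Type*} [Fintype ι] [DecidableEq ι]

theorem monotone_of_update_le_update [Preorder α] {β : Type*} [Preorder β] {f : (ι → α) → β}
    (h : ∀ x i a b, a ≤ b → f (update x i a) ≤ f (update x i b)) : Monotone f := by
  intro x y hxy
  suffices ∀ S : Finset ι, ∀ x ≤ y, (∀ i ∉ S, x i = y i) → f x ≤ f y from
    this univ x hxy fun i hi => absurd (mem_univ i) hi
  intro S
  induction S using Finset.induction_on with
  | empty => exact fun x _ hx => (funext fun i => hx i (notMem_empty i)) ▸ le_rfl
  | insert j S hj ih =>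
    intro x hxy hx
    have hstep : f x ≤ f (update x j (y j)) := by
      simpa using h x j (x j) (y j) (hxy j)
    refine hstep.trans (ih _ (update_le_iff.2 ⟨le_rfl, fun i _ => hxy i⟩) fun i hi => ?_)
    rcases eq_or_ne i j with rfl | hij
    · simp
    · simpa [hij] using hx i (by simp [hij, hi])

variable {M : Type*} [AddCommGroup M] [PartialOrder M] [IsOrderedAddMonoid M]

theorem monotone_update_sub_of_boxDiff_pair_nonneg [Preorder α] {F : (ι → α) → M}
    (hpair : ∀ l j, l ≠ j → ∀ a b : ι → α, a l ≤ b l → a j ≤ b j → 0 ≤ boxDiff F {l, j} a b)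
    (l : ι) {a b : α} (hab : a ≤ b) :
    Monotone fun w => F (update w l b) - F (update w l a) := by
  refine monotone_of_update_le_update fun w j c d hcd => ?_
  rcases eq_or_ne j l with rfl | hjl
  · simp only [update_idem, le_rfl]
  have h := hpair l j hjl.symm (update (update w j c) l a) (update (update w j d) l b)
    (by simpa using hab) (by simpa [hjl] using hcd)
  rw [boxDiff_insert F (by simpa using hjl.symm), boxDiff_singleton, boxDiff_singleton] at h
  simp only [update_self, update_of_ne hjl, update_idem, update_comm hjl.symm] at h
  rw [sub_sub_sub_comm] at h
  exact sub_nonneg.1 h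

/-- Lower the coordinates where `x` exceeds `y` one at a time. -/
theorem supermodular_of_monotone_update_sub [LinearOrder α] {F : (ι → α) → M}
    (hD : ∀ l {a b : α}, a ≤ b → Monotone fun w => F (update w l b) - F (update w l a))
    (x y : ι → α) : F x + F y ≤ F (x ⊔ y) + F (x ⊓ y) := by
  suffices ∀ A : Finset ι, ∀ x : ι → α, (∀ i ∉ A, x i ≤ y i) →
      F x + F y ≤ F (x ⊔ y) + F (x ⊓ y) from
    this univ x fun i hi => absurd (mem_univ i) hi
  intro A
  induction A using Finset.induction_on with
  | empty =>
    intro x hx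
    have hxy : x ≤ y := fun i => hx i (notMem_empty i)
    rw [sup_of_le_right hxy, inf_of_le_left hxy, add_comm]
  | insert l A hl ih =>
    intro x hx
    rcases le_or_gt (x l) (y l) with hxl | hyl
    · refine ih x fun i hi => ?_
      rcases eq_or_ne i l with rfl | hil
      · exact hxl
      · exact hx i (by simp [hil, hi])
    set x' := update x l (y l)
    have hx' := ih x' fun i hi => by
      rcases eq_or_ne i l with rfl | hil
      · simp [x']
      · simpa [x', hil] using hx i (by simp [hil, hi])
    have hinf : x' ⊓ y = x ⊓ y := by
      ext i; rcases eq_or_ne i l with rfl | hil <;> simp [x', *, hyl.le]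
    have hsup : x' ⊔ y = update (x ⊔ y) l (y l) := by
      ext i; rcases eq_or_ne i l with rfl | hil <;> simp [x', *]
    have hD' : F x - F x' ≤ F (x ⊔ y) - F (x' ⊔ y) := by
      have h := hD l hyl.le (le_sup_left : x ≤ x ⊔ y)
      have hxl : x l = (x ⊔ y) l := (sup_of_le_left hyl.le).symm
      dsimp only at h
      rwa [update_eq_self, hxl, update_eq_self, ← hsup] at h
    calc F x + F y = (F x - F x') + (F x' + F y) := by abel
      _ ≤ (F (x ⊔ y) - F (x' ⊔ y)) + (F (x' ⊔ y) + F (x' ⊓ y)) := add_le_add hD' hx'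
      _ = F (x ⊔ y) + F (x ⊓ y) := by rw [hinf]; abel

end Supermodular

theorem monotone_of_isLUB_image_lt {ι α β : Type*} [Preorder α] [Preorder β]
    {F : (ι → α) → β} (h : ∀ t, IsLUB (F '' {s | ∀ i, s i < t i}) (F t)) : Monotone F :=
  fun _ b hab => (h _).2 <| by
    rintro _ ⟨s, hs, rfl⟩
    exact (h b).1 ⟨s, fun i => (hs i).trans_le (hab i), rfl⟩

theorem Paper.IsSR1.monotone {ι G : Type*} [Fintype ι] [DecidableEq ι] [AddCommGroup G]
    [PartialOrder G] {F : (ι → ℝ) → ℤ ×ₗ G} (hF : IsSR1 F) : Monotone F :=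
  monotone_of_isLUB_image_lt hF.leftCont

theorem Paper.IsSR1.supermodular {ι G : Type*} [Fintype ι] [DecidableEq ι] [AddCommGroup G]
    [PartialOrder G] [IsOrderedAddMonoid G] (hsc : MonSigmaComplete G)
    {F : (ι → ℝ) → ℤ ×ₗ G} (hF : IsSR1 F) (x y : ι → ℝ) :
    F x + F y ≤ F (x ⊔ y) + F (x ⊓ y) :=
  supermodular_of_monotone_update_sub (fun _ _ _ hab =>
    monotone_update_sub_of_boxDiff_pair_nonneg (fun l j _ a b hl hj =>
      boxDiff_nonneg hsc hF.monotone hF.coordZero hF.vol _ a b (by simp [hl, hj])) _ hab) x y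

section Blocks

variable {κ μ α M : Type*}

theorem add_le_add_sum_elim_of_supermodular [Lattice α] [Add M] [LE M]
    {F : (κ ⊕ μ → α) → M}
    (hsup : ∀ x y, F x + F y ≤ F (x ⊔ y) + F (x ⊓ y)) {q s : κ → α} (hqs : q ≤ s)
    {r r₁ : μ → α} (hr : r ≤ r₁) :
    F (Sum.elim s r) + F (Sum.elim q r₁) ≤ F (Sum.elim s r₁) + F (Sum.elim q r) := by
  have hsup' : Sum.elim s r ⊔ Sum.elim q r₁ = Sum.elim s r₁ := by
    ext (i | j) <;> simp [sup_of_le_left (hqs _), sup_of_le_right (hr _)]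
  have hinf : Sum.elim s r ⊓ Sum.elim q r₁ = Sum.elim q r := by
    ext (i | j) <;> simp [inf_of_le_right (hqs _), inf_of_le_left (hr _)]
  simpa only [hsup', hinf] using hsup (Sum.elim s r) (Sum.elim q r₁)

theorem add_le_isGLB_add_of_supermodular [LinearOrder α] [AddCommGroup M] [PartialOrder M]
    [IsOrderedAddMonoid M] {F : (κ ⊕ μ → α) → M} (hmono : Monotone F)
    (hsup : ∀ x y, F x + F y ≤ F (x ⊔ y) + F (x ⊓ y)) {q s : κ → α} (hqs : q ≤ s)
    {t r₁ : μ → α} (hr₁ : ∀ j, t j < r₁ j) {a b : M}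
    (ha : a ∈ lowerBounds {y | ∃ r : μ → α, (∀ j, t j < r j) ∧ y = F (Sum.elim s r)})
    (hb : IsGLB {y | ∃ r : μ → α, (∀ j, t j < r j) ∧ y = F (Sum.elim q r)} b) :
    a + F (Sum.elim q r₁) ≤ b + F (Sum.elim s r₁) := by
  rw [← sub_le_iff_le_add]
  refine hb.2 ?_
  rintro _ ⟨r, hr, rfl⟩
  rw [sub_le_iff_le_add]
  calc a + F (Sum.elim q r₁) ≤ F (Sum.elim s (r ⊓ r₁)) + F (Sum.elim q r₁) :=
        add_le_add_left (ha ⟨r ⊓ r₁, fun j => lt_min (hr j) (hr₁ j), rfl⟩) _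
    _ ≤ F (Sum.elim s r₁) + F (Sum.elim q (r ⊓ r₁)) :=
        add_le_add_sum_elim_of_supermodular hsup hqs inf_le_right
    _ ≤ F (Sum.elim s r₁) + F (Sum.elim q r) :=
        add_le_add_right (hmono (Sum.elim_le_elim_iff.2 ⟨le_rfl, inf_le_left⟩)) _
    _ = F (Sum.elim q r) + F (Sum.elim s r₁) := add_comm _ _

end Blocks

open Paper in
theorem statement_6_general {G : Type*} [AddCommGroup G] [PartialOrder G]
    [CovariantClass G G (· + ·) (· ≤ ·)]
    (hsc : MonSigmaComplete G)
    {k m : ℕ}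
    (F : ((Fin k ⊕ Fin m) → ℝ) → ℤ ×ₗ G) (hF : IsSR1 F)
    (s : Fin k → ℝ) (t : Fin m → ℝ)
    (g : (Fin k → ℝ) → ℤ ×ₗ G)
    (hg : ∀ q : Fin k → ℝ, (∀ i, q i < s i) →
      IsGLB {y | ∃ r : Fin m → ℝ, (∀ j, t j < r j) ∧ y = F (Sum.elim q r)} (g q))
    (M : ℤ ×ₗ G)
    (hM : IsGLB {y | ∃ r : Fin m → ℝ, (∀ j, t j < r j) ∧ y = F (Sum.elim s r)} M) :
    IsLUB {y | ∃ q : Fin k → ℝ, (∀ i, q i < s i) ∧ y = g q} M := by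
  have : IsOrderedAddMonoid G :=
    { add_le_add_left := fun _ _ h c => by simpa only [add_comm _ c] using add_le_add_right h c }
  refine ⟨?_, fun u hu => ?_⟩
  · rintro _ ⟨q, hq, rfl⟩
    refine hM.2 ?_
    rintro _ ⟨r, hr, rfl⟩
    exact ((hg q hq).1 ⟨r, hr, rfl⟩).trans
      (hF.monotone (Sum.elim_le_elim_iff.2 ⟨fun i => (hq i).le, le_rfl⟩))
  set r₁ : Fin m → ℝ := fun j => t j + 1
  have hbound : ∀ q, (∀ i, q i < s i) → M + F (Sum.elim q r₁) ≤ u + F (Sum.elim s r₁) :=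
    fun q hq => (add_le_isGLB_add_of_supermodular hF.monotone (hF.supermodular hsc)
      (fun i => (hq i).le) (fun j => lt_add_one (t j)) hM.1 (hg q hq)).trans
      (add_le_add_left (hu ⟨q, hq, rfl⟩) _)
  have hlc : M + F (Sum.elim s r₁) ≤ u + F (Sum.elim s r₁) := le_sub_iff_add_le'.1 <|
    (hF.leftCont _).2 <| by
      rintro _ ⟨σ, hσ, rfl⟩
      have hσ₁ : σ ≤ Sum.elim (σ ∘ Sum.inl) r₁
        | .inl _ => le_rfl
        | .inr j => (hσ (.inr j)).le
      exact (hF.monotone hσ₁).trans (le_sub_iff_add_le'.2 (hbound _ fun i => hσ (.inl i)))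
  exact le_of_add_le_add_right hlc

open Paper in
/-- Lemma 3.2: for an `n`-dimensional spectral resolution `F` on the perfect
effect algebra `Γ_ea(ℤ ×ₗ G,(1,0))`, splitting the `n` coordinates as `Fin k ⊕ Fin m`
(`1 ≤ k`, `1 ≤ m`), the infimum `⋀{F(s̄,r̄) : r̄ ≫ t̄}` is the least upper bound of the
family of infima `⋀{F(q̄,r̄) : r̄ ≫ t̄}` over `q̄ ≪ s̄`, provided these infima exist. -/
theorem statement_6 {G : Type*} [AddCommGroup G] [PartialOrder G]
    [CovariantClass G G (· + ·) (· ≤ ·)]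
    (hdir : DirectedPO G) (hip : RieszInterp G) (hsc : MonSigmaComplete G)
    {k m : ℕ} (hk : 1 ≤ k) (hm : 1 ≤ m)
    (F : ((Fin k ⊕ Fin m) → ℝ) → ℤ ×ₗ G) (hF : IsSR1 F)
    (s : Fin k → ℝ) (t : Fin m → ℝ)
    (g : (Fin k → ℝ) → ℤ ×ₗ G)
    (hg : ∀ q : Fin k → ℝ, (∀ i, q i < s i) →
      IsGLB {y | ∃ r : Fin m → ℝ, (∀ j, t j < r j) ∧ y = F (Sum.elim q r)} (g q))
    (M : ℤ ×ₗ G)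
    (hM : IsGLB {y | ∃ r : Fin m → ℝ, (∀ j, t j < r j) ∧ y = F (Sum.elim s r)} M) :
    IsLUB {y | ∃ q : Fin k → ℝ, (∀ i, q i < s i) ∧ y = g q} M :=
  statement_6_general hsc F hF s t g hg M hM
end

section
/- Let M = Γ(ℤ ×ₗ G,(1,0)) be the perfect MV-algebra, where G is a Dedekind σ-complete abelian lattice-ordered group, let x₁,…,xₙ be one-dimensional observables on M, and let x be their n-dimensional meet joint observable, i.e. the unique n-dimensional observable with x((−∞,s₁) × ⋯ × (−∞,sₙ)) = x₁((−∞,s₁)) ⊓ ⋯ ⊓ xₙ((−∞,sₙ)) for all s̄ ∈ ℝⁿ. Then: (1) x(πᵢ⁻¹(A)) = xᵢ(A) for every Borel set A ⊆ ℝ and every i = 1,…,n, where πᵢ : ℝⁿ → ℝ is the i-th coordinate projection; (2) x(A₁ × ⋯ × Aₙ) ≤ x₁(A₁) ⊓ ⋯ ⊓ xₙ(Aₙ) for all Borel sets A₁,…,Aₙ ⊆ ℝ. Moreover, the inequality in (2) can be strict: for G = ℝ there exist one-dimensional observables x, y on Γ(ℤ ×ₗ ℝ,(1,0)) with x({2})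 = (0,3), x({3}) = (1,−3), y({1}) = (0,4), y({5}) = (1,−4), for which the two-dimensional meet joint observable z satisfies z(A × B) < x(A) ⊓ y(B) for some Borel A, B. -/
open Classical

/-!
On a ray the marginal identity is squeezed from both sides. The boxes with `i`-th side
`(-∞, c)` and all other sides `(-∞, n)` exhaust `πᵢ⁻¹(-∞, c)`, and `x` of each box lies below
`xᵢ(-∞, c)`. Conversely, with `u = (k, 0)` the unit, the Łukasiewicz product
`xᵢ(-∞, c) + ∑ⱼ (xⱼ(-∞, n) - u)` lies below every side value of the box, hence below `x` of the
box, and it increases to `xᵢ(-∞, c)` since each `xⱼ(-∞, n)` increases to `u`. As `x ∘ πᵢ⁻¹` and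
`xᵢ` are both observables, a Dynkin-system argument carries the equality from rays to all Borel
sets, and (2) follows by monotonicity.

For strictness, let `x'`, `y'` be the two-point observables. The meet joint observable gives the
same mass `(0, 3)` to the quadrants `{p₀ < 3, p₁ < 6}` and `{p₀ < 3, p₁ < 5}`, so it vanishes on
the point `(2, 5)` between them, while `x'{2} ⊓ y'{5} = (0, 3)`.
-/

open Set Function Paper

section OrderedGroup

variable {M ι κ : Type*} [AddCommGroup M] [PartialOrder M] [IsOrderedAddMonoid M]

theorem isLUB_range_add [Preorder ι] [IsDirectedOrder ι] {u v : ι → M} {a b : M}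
    (hu : Monotone u) (hv : Monotone v) (ha : IsLUB (range u) a) (hb : IsLUB (range v) b) :
    IsLUB (range fun i => u i + v i) (a + b) := by
  refine (isLUB_congr ?_).1 (ha.add hb)
  refine Subset.antisymm (upperBounds_mono_set ?_) fun c hc => ?_
  · rintro _ ⟨i, rfl⟩
    exact add_mem_add ⟨i, rfl⟩ ⟨i, rfl⟩
  · rintro _ ⟨_, ⟨i, rfl⟩, _, ⟨j, rfl⟩, rfl⟩
    obtain ⟨l, hil, hjl⟩ := directed_of (· ≤ ·) i j
    exact (add_le_add (hu hil) (hv hjl)).trans (hc ⟨l, rfl⟩)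

theorem isLUB_range_sum [Preorder ι] [IsDirectedOrder ι] [Nonempty ι] {s : Finset κ}
    {u : κ → ι → M} {a : κ → M} (hu : ∀ j ∈ s, Monotone (u j))
    (ha : ∀ j ∈ s, IsLUB (range (u j)) (a j)) :
    IsLUB (range fun i => ∑ j ∈ s, u j i) (∑ j ∈ s, a j) := by
  induction s using Finset.induction_on with
  | empty => simp [isLUB_singleton]
  | insert j s hj ih =>
    simp only [Finset.sum_insert hj]
    refine isLUB_range_add (hu j (s.mem_insert_self j))
      (fun i i' h => Finset.sum_le_sum fun l hl => hu l (Finset.mem_insert_of_mem hl) h)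
      (ha j (s.mem_insert_self j)) (ih ?_ ?_)
    · exact fun l hl => hu l (Finset.mem_insert_of_mem hl)
    · exact fun l hl => ha l (Finset.mem_insert_of_mem hl)

theorem IsLUB.range_sub_const {u : ι → M} {a : M} (h : IsLUB (range u) a) (c : M) :
    IsLUB (range fun i => u i - c) (a - c) := by
  simpa [← range_comp, comp_def, sub_eq_add_neg] using
    (OrderIso.addRight (-c)).isLUB_image'.2 h

theorem add_sum_sub_le_self {s : Finset κ} {b : κ → M} {e : M} (hb : ∀ j ∈ s, b j ≤ e) (a : M) :
    a + ∑ j ∈ s, (b j - e) ≤ a :=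
  add_le_of_nonpos_right (Finset.sum_nonpos fun j hj => sub_nonpos.2 (hb j hj))

theorem add_sum_sub_le_of_mem {s : Finset κ} {b : κ → M} {a e : M} (hb : ∀ j ∈ s, b j ≤ e)
    (ha : a ≤ e) {j : κ} (hj : j ∈ s) : a + ∑ j ∈ s, (b j - e) ≤ b j := by
  have hsum : ∑ j ∈ s, (b j - e) ≤ b j - e := by
    rw [← Finset.add_sum_erase s _ hj]
    exact add_le_of_nonpos_right
      (Finset.sum_nonpos fun l hl => sub_nonpos.2 (hb l (Finset.mem_of_mem_erase hl)))
  calc a + ∑ j ∈ s, (b j - e) ≤ e + (b j - e) := add_le_add ha hsum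
    _ = b j := add_sub_cancel e (b j)

end OrderedGroup

theorem isLUB_range_indicator {M ι X : Type*} [Preorder M] [Zero M] [Nonempty ι]
    {A : ι → Set X} {a : M} (ha : 0 ≤ a) (p : X) :
    IsLUB (range fun i => (A i).indicator (fun _ => a) p)
      ((⋃ i, A i).indicator (fun _ => a) p) := by
  by_cases hp : p ∈ ⋃ i, A i
  · obtain ⟨i, hi⟩ := mem_iUnion.1 hp
    rw [indicator_of_mem hp]
    refine ⟨?_, fun b hb => ?_⟩
    · rintro _ ⟨j, rfl⟩
      exact indicator_apply_le' (fun _ => le_rfl) fun _ => ha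
    · simpa [indicator_of_mem hi] using hb ⟨i, rfl⟩
  · have hpi : ∀ i, p ∉ A i := fun i h => hp (mem_iUnion_of_mem i h)
    simp [indicator_of_notMem hp, indicator_of_notMem (hpi _), isLUB_singleton]

namespace Paper.IsObs

variable {G X : Type*} [AddCommGroup G] [PartialOrder G] [MeasurableSpace X] {k : ℤ}
  {x y : Set X → ℤ ×ₗ G} {A B : Set X}

theorem nonneg (hx : IsObs k x) (hA : MeasurableSet A) : 0 ≤ x A := (hx.1 A hA).1

theorem le_unit (hx : IsObs k x) (hA : MeasurableSet A) : x A ≤ toLex (k, 0) := (hx.1 A hA).2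

theorem apply_univ (hx : IsObs k x) : x univ = toLex (k, 0) := hx.2.1

theorem apply_union (hx : IsObs k x) (hA : MeasurableSet A) (hB : MeasurableSet B)
    (hAB : Disjoint A B) : x (A ∪ B) = x A + x B :=
  hx.2.2.1 A B hA hB hAB

theorem isLUB_iUnion (hx : IsObs k x) {A : ℕ → Set X} (hA : ∀ i, MeasurableSet (A i))
    (hmono : Monotone A) : IsLUB (range fun i => x (A i)) (x (⋃ i, A i)) :=
  hx.2.2.2 A hA hmono

theorem apply_empty (hx : IsObs k x) : x ∅ = 0 := by
  simpa using hx.apply_union MeasurableSet.empty MeasurableSet.empty (disjoint_empty ∅)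

theorem apply_diff (hx : IsObs k x) (hA : MeasurableSet A) (hB : MeasurableSet B)
    (hAB : A ⊆ B) : x (B \ A) = x B - x A := by
  rw [eq_sub_iff_add_eq', ← hx.apply_union hA (hB.diff hA) disjoint_sdiff_right,
    union_sdiff_cancel hAB]

theorem mono [IsOrderedAddMonoid G] (hx : IsObs k x) (hA : MeasurableSet A)
    (hB : MeasurableSet B) (hAB : A ⊆ B) : x A ≤ x B := by
  simpa [hx.apply_diff hA hB hAB] using hx.nonneg (hB.diff hA)

theorem apply_compl (hx : IsObs k x) (hA : MeasurableSet A) : x Aᶜ = toLex (k, 0) - x A := by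
  rw [compl_eq_univ_sdiff, hx.apply_diff hA MeasurableSet.univ (subset_univ A), hx.apply_univ]

theorem map (hx : IsObs k x) {Y : Type*} [MeasurableSpace Y] {f : X → Y} (hf : Measurable f) :
    IsObs k fun A => x (f ⁻¹' A) :=
  ⟨fun _ hA => hx.1 _ (hf hA), hx.apply_univ,
    fun _ _ hA hB hAB => hx.apply_union (hf hA) (hf hB) (hAB.preimage f),
    fun _ hA hmono => by
      simpa only [preimage_iUnion] using
        hx.isLUB_iUnion (fun i => hf (hA i)) fun _ _ h => preimage_mono (hmono h)⟩

theorem ext_of_generateFrom {C : Set (Set X)} (hgen : ‹MeasurableSpace X› = .generateFrom C)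
    (hC : IsPiSystem C) (hx : IsObs k x) (hy : IsObs k y) (h : ∀ A ∈ C, x A = y A)
    (hA : MeasurableSet A) : x A = y A := by
  induction A, hA using MeasurableSpace.induction_on_inter hgen hC with
  | empty => rw [hx.apply_empty, hy.apply_empty]
  | basic A hA => exact h A hA
  | compl A hA ih => rw [hx.apply_compl hA, hy.apply_compl hA, ih]
  | iUnion f hdisj hf ih =>
    have hacc : ∀ n, MeasurableSet (accumulate f n) := fun n =>
      .iUnion fun j => .iUnion fun _ => hf j
    have heq : ∀ n, x (accumulate f n) = y (accumulate f n) := by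
      intro n
      induction n with
      | zero => simpa using ih 0
      | succ n ihn =>
        have hd := disjoint_accumulate hdisj (Nat.lt_succ_self n)
        rw [accumulate_succ, hx.apply_union (hacc n) (hf _) hd,
          hy.apply_union (hacc n) (hf _) hd, ihn, ih]
    rw [← iUnion_accumulate]
    refine (hx.isLUB_iUnion hacc monotone_accumulate).unique ?_
    simpa only [heq] using hy.isLUB_iUnion hacc monotone_accumulate

theorem isLUB_Iio_natCast {x : Set ℝ → ℤ ×ₗ G} (hx : IsObs k x) :
    IsLUB (range fun n : ℕ => x (Iio n)) (toLex (k, 0)) := by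
  have hunion : ⋃ n : ℕ, Iio (n : ℝ) = univ :=
    eq_univ_of_forall fun r => mem_iUnion.2 (exists_nat_gt r)
  simpa [hunion, hx.apply_univ] using
    hx.isLUB_iUnion (fun _ => measurableSet_Iio) fun _ _ h => Iio_subset_Iio (Nat.cast_le.2 h)

end Paper.IsObs

section MeetJoint

variable {G ι : Type*} [AddCommGroup G] [PartialOrder G]

def IsMeetJoint (xs : ι → Set ℝ → ℤ ×ₗ G) (x : Set (ι → ℝ) → ℤ ×ₗ G) : Prop :=
  ∀ t : ι → ℝ, IsGLB (range fun i => xs i (Iio (t i))) (x {s | ∀ i, s i < t i})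

theorem monotone_setOf_forall_lt_update [DecidableEq ι] (i : ι) (c : ℝ) :
    Monotone fun n : ℕ => {s : ι → ℝ | ∀ j, s j < update (fun _ => (n : ℝ)) i c j} := by
  intro n m hnm s hs j
  refine (hs j).trans_le ?_
  rcases eq_or_ne j i with rfl | hj
  · simp
  · simpa [hj] using hnm

theorem iUnion_setOf_forall_lt_update [Finite ι] [DecidableEq ι] (i : ι) (c : ℝ) :
    ⋃ n : ℕ, {s : ι → ℝ | ∀ j, s j < update (fun _ => (n : ℝ)) i c j} =
      (fun s => s i) ⁻¹' Iio c := by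
  ext s
  simp only [mem_iUnion, mem_preimage, mem_Iio]
  refine ⟨fun ⟨n, hn⟩ => by simpa using hn i, fun hs => ?_⟩
  obtain ⟨b, hb⟩ := Finite.exists_le s
  obtain ⟨n, hn⟩ := exists_nat_gt b
  refine ⟨n, fun j => ?_⟩
  rcases eq_or_ne j i with rfl | hj
  · simpa using hs
  · simpa [hj] using (hb j).trans_lt hn

theorem measurableSet_setOf_forall_lt [Countable ι] (t : ι → ℝ) :
    MeasurableSet {s : ι → ℝ | ∀ j, s j < t j} := by
  simpa [Set.pi] using MeasurableSet.univ_pi fun j => measurableSet_Iio (a := t j)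

variable [IsOrderedAddMonoid G] [Fintype ι] {k : ℤ} {xs : ι → Set ℝ → ℤ ×ₗ G}
  {x : Set (ι → ℝ) → ℤ ×ₗ G}

theorem IsMeetJoint.apply_preimage_eval_Iio (hmeet : IsMeetJoint xs x)
    (hxs : ∀ i, IsObs k (xs i)) (hx : IsObs k x) (i : ι) (c : ℝ) :
    x ((fun s => s i) ⁻¹' Iio c) = xs i (Iio c) := by
  set e : ℤ ×ₗ G := toLex (k, 0)
  set t : ℕ → ι → ℝ := fun n => update (fun _ => (n : ℝ)) i c
  have hlub : IsLUB (range fun n => x {s | ∀ j, s j < t n j}) (x ((fun s => s i) ⁻¹' Iio c)) := by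
    rw [← iUnion_setOf_forall_lt_update i c]
    exact hx.isLUB_iUnion (fun n => measurableSet_setOf_forall_lt (t n))
      (monotone_setOf_forall_lt_update i c)
  have hmono : ∀ j, Monotone fun n : ℕ => xs j (Iio n) := fun j n m h =>
    (hxs j).mono measurableSet_Iio measurableSet_Iio (Iio_subset_Iio (Nat.cast_le.2 h))
  have hle : ∀ j (r : ℝ), xs j (Iio r) ≤ e := fun j _ => (hxs j).le_unit measurableSet_Iio
  refine le_antisymm (hlub.2 ?_) ?_
  · rintro _ ⟨n, rfl⟩
    simpa [t] using (hmeet (t n)).1 ⟨i, rfl⟩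
  set d : ℕ → ℤ ×ₗ G := fun n => xs i (Iio c) + ∑ j, (xs j (Iio n) - e)
  have hd : IsLUB (range d) (xs i (Iio c)) := by
    simpa only [e, sub_self, Finset.sum_const_zero, add_zero] using isLUB_range_add monotone_const
      (fun n m h => Finset.sum_le_sum fun j _ => sub_le_sub_right (hmono j h) e)
      (by simp [isLUB_singleton] : IsLUB (range fun _ : ℕ => xs i (Iio c)) (xs i (Iio c)))
      (isLUB_range_sum (s := Finset.univ) (fun j _ _ _ h => sub_le_sub_right (hmono j h) e)
        fun j _ => (hxs j).isLUB_Iio_natCast.range_sub_const e)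
  refine hd.2 ?_
  rintro _ ⟨n, rfl⟩
  refine le_trans ((hmeet (t n)).2 ?_) (hlub.1 ⟨n, rfl⟩)
  rintro _ ⟨j, rfl⟩
  rcases eq_or_ne j i with rfl | hj
  · simp only [t, update_self]
    exact add_sum_sub_le_self (fun l _ => hle l n) _
  · simp only [t, update_of_ne hj]
    exact add_sum_sub_le_of_mem (fun l _ => hle l n) (hle i c) (Finset.mem_univ j)

theorem IsMeetJoint.apply_preimage_eval (hmeet : IsMeetJoint xs x)
    (hxs : ∀ i, IsObs k (xs i)) (hx : IsObs k x) (i : ι) {A : Set ℝ} (hA : MeasurableSet A) :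
    x ((fun s => s i) ⁻¹' A) = xs i A :=
  (hx.map (measurable_pi_apply i)).ext_of_generateFrom
    (BorelSpace.measurable_eq.trans (borel_eq_generateFrom_Iio ℝ)) isPiSystem_Iio (hxs i)
    (by rintro _ ⟨c, rfl⟩; exact hmeet.apply_preimage_eval_Iio hxs hx i c) hA

theorem IsMeetJoint.apply_pi_le (hmeet : IsMeetJoint xs x)
    (hxs : ∀ i, IsObs k (xs i)) (hx : IsObs k x) {A : ι → Set ℝ} (hA : ∀ i, MeasurableSet (A i))
    (i : ι) : x {s | ∀ j, s j ∈ A j} ≤ xs i (A i) := by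
  rw [← hmeet.apply_preimage_eval hxs hx i (hA i)]
  exact hx.mono (by simpa [Set.pi] using MeasurableSet.univ_pi hA)
    (measurable_pi_apply i (hA i)) fun s hs => hs i

end MeetJoint

section TwoPoint

variable {G X : Type*} [AddCommGroup G] [PartialOrder G] [IsOrderedAddMonoid G]
  [MeasurableSpace X]

noncomputable def twoPointObs (p q : X) (a b : ℤ ×ₗ G) (A : Set X) : ℤ ×ₗ G :=
  A.indicator (fun _ => a) p + A.indicator (fun _ => b) q

theorem isObs_twoPointObs {k : ℤ} (p q : X) {a b : ℤ ×ₗ G} (ha : 0 ≤ a) (hb : 0 ≤ b)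
    (hab : a + b = toLex (k, 0)) : IsObs k (twoPointObs p q a b) := by
  refine ⟨fun A _ => ⟨?_, ?_⟩, by simp [twoPointObs, hab], fun A B _ _ hAB => ?_,
    fun A _ hmono => ?_⟩
  · exact add_nonneg (indicator_nonneg (fun _ _ => ha) p) (indicator_nonneg (fun _ _ => hb) q)
  · rw [← hab]
    exact add_le_add (indicator_apply_le' (fun _ => le_rfl) fun _ => ha)
      (indicator_apply_le' (fun _ => le_rfl) fun _ => hb)
  · simp only [twoPointObs, indicator_union_of_disjoint hAB]
    abel
  · exact isLUB_range_add (fun _ _ h => indicator_le_indicator_of_subset (hmono h) (fun _ => ha) p)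
      (fun _ _ h => indicator_le_indicator_of_subset (hmono h) (fun _ => hb) q)
      (isLUB_range_indicator ha p) (isLUB_range_indicator hb q)

end TwoPoint

theorem exists_isObs_pair_apply_prod_lt_meet :
    ∃ x' y' : Set ℝ → ℤ ×ₗ ℝ, IsObs 1 x' ∧ IsObs 1 y' ∧
      x' {(2 : ℝ)} = toLex (0, 3) ∧ x' {(3 : ℝ)} = toLex (1, -3) ∧
      y' {(1 : ℝ)} = toLex (0, 4) ∧ y' {(5 : ℝ)} = toLex (1, -4) ∧
      ∀ z : Set (Fin 2 → ℝ) → ℤ ×ₗ ℝ, IsObs 1 z →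
        (∀ s t : ℝ, IsGLB ({x' (Set.Iio s), y' (Set.Iio t)} : Set (ℤ ×ₗ ℝ))
          (z {p | p 0 < s ∧ p 1 < t})) →
        ∃ A B : Set ℝ, MeasurableSet A ∧ MeasurableSet B ∧
          ∃ mAB : ℤ ×ₗ ℝ, IsGLB ({x' A, y' B} : Set (ℤ ×ₗ ℝ)) mAB ∧
            z {p | p 0 ∈ A ∧ p 1 ∈ B} < mAB := by
  set x' := twoPointObs (2 : ℝ) 3 (toLex ((0 : ℤ), (3 : ℝ))) (toLex (1, -3))
  set y' := twoPointObs (1 : ℝ) 5 (toLex ((0 : ℤ), (4 : ℝ))) (toLex (1, -4))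
  have hx'2 : x' {2} = toLex (0, 3) := by simp [x', twoPointObs]
  have hy'5 : y' {5} = toLex (1, -4) := by simp [y', twoPointObs]
  have hx' : IsObs 1 x' := isObs_twoPointObs _ _ (by simp [← toLex_zero, Prod.Lex.toLex_le_toLex])
    (by simp [← toLex_zero, Prod.Lex.toLex_le_toLex]) (by simp [← toLex_add])
  have hy' : IsObs 1 y' := isObs_twoPointObs _ _ (by simp [← toLex_zero, Prod.Lex.toLex_le_toLex])
    (by simp [← toLex_zero, Prod.Lex.toLex_le_toLex]) (by simp [← toLex_add])
  refine ⟨x', y', hx', hy', hx'2, by simp [x', twoPointObs], by simp [y', twoPointObs], hy'5,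
    fun z hz hzmeet => ?_⟩
  have hmeas : ∀ s t : ℝ, MeasurableSet {p : Fin 2 → ℝ | p 0 < s ∧ p 1 < t} := fun s t =>
    (measurable_pi_apply 0 measurableSet_Iio).inter (measurable_pi_apply 1 measurableSet_Iio)
  have hval : ∀ s t, z {p | p 0 < s ∧ p 1 < t} = x' (Iio s) ⊓ y' (Iio t) :=
    fun s t => (hzmeet s t).unique isGLB_pair
  have h36 : z {p | p 0 < 3 ∧ p 1 < 6} = toLex (0, 3) := by
    norm_num [hval, x', y', twoPointObs, indicator, ← toLex_add, min_def, Prod.Lex.toLex_le_toLex]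
  have h35 : z {p | p 0 < 3 ∧ p 1 < 5} = toLex (0, 3) := by
    norm_num [hval, x', y', twoPointObs, indicator, ← toLex_add, min_def, Prod.Lex.toLex_le_toLex]
  have hsub : {p : Fin 2 → ℝ | p 0 < 3 ∧ p 1 < 5} ⊆ {p | p 0 < 3 ∧ p 1 < 6} :=
    fun p hp => ⟨hp.1, hp.2.trans (by norm_num)⟩
  refine ⟨{2}, {5}, measurableSet_singleton 2, measurableSet_singleton 5,
    toLex ((0 : ℤ), (3 : ℝ)), ?_, ?_⟩
  · rw [hx'2, hy'5]
    have hle : toLex ((0 : ℤ), (3 : ℝ)) ≤ toLex (1, -4) := by simp [Prod.Lex.toLex_le_toLex]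
    simpa [min_eq_left hle] using isGLB_pair (a := toLex ((0 : ℤ), (3 : ℝ))) (b := toLex (1, -4))
  · calc z {p | p 0 ∈ ({2} : Set ℝ) ∧ p 1 ∈ ({5} : Set ℝ)}
        ≤ z ({p | p 0 < 3 ∧ p 1 < 6} \ {p | p 0 < 3 ∧ p 1 < 5}) := by
          refine hz.mono ((measurable_pi_apply 0 (measurableSet_singleton 2)).inter
            (measurable_pi_apply 1 (measurableSet_singleton 5))) ((hmeas 3 6).diff (hmeas 3 5)) ?_
          rintro p ⟨h0, h1⟩
          simp only [mem_singleton_iff] at h0 h1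
          norm_num [h0, h1]
      _ = 0 := by rw [hz.apply_diff (hmeas 3 5) (hmeas 3 6) hsub, h36, h35, sub_self]
      _ < toLex (0, 3) := by simp [← toLex_zero, Prod.Lex.toLex_lt_toLex]

open Paper in
theorem statement_18_general {G : Type*} [AddCommGroup G] [Lattice G]
    [CovariantClass G G (· + ·) (· ≤ ·)]
    {n : ℕ}
    (xs : Fin n → Set ℝ → ℤ ×ₗ G) (hxs : ∀ i, IsObs 1 (xs i))
    (x : Set (Fin n → ℝ) → ℤ ×ₗ G) (hx : IsObs 1 x)
    (hmeet : ∀ t : Fin n → ℝ,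
      IsGLB (Set.range fun i => xs i (Set.Iio (t i))) (x {s | ∀ i, s i < t i})) :
    -- (1) the marginals of `x` are the `xᵢ`'s
    (∀ (i : Fin n) (A : Set ℝ), MeasurableSet A →
      x ((fun s : Fin n → ℝ => s i) ⁻¹' A) = xs i A) ∧
    -- (2) `x(A₁ × ⋯ × Aₙ) ≤ xᵢ(Aᵢ)` for each `i`, i.e. `x(A₁ × ⋯ × Aₙ)` is below the meet
    (∀ A : Fin n → Set ℝ, (∀ i, MeasurableSet (A i)) →
      ∀ i : Fin n, x {s | ∀ j, s j ∈ A j} ≤ xs i (A i)) ∧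
    -- moreover, the inequality can be strict: a concrete example over `G = ℝ`
    (∃ x' y' : Set ℝ → ℤ ×ₗ ℝ, IsObs 1 x' ∧ IsObs 1 y' ∧
      x' {(2 : ℝ)} = toLex (0, 3) ∧ x' {(3 : ℝ)} = toLex (1, -3) ∧
      y' {(1 : ℝ)} = toLex (0, 4) ∧ y' {(5 : ℝ)} = toLex (1, -4) ∧
      ∀ z : Set (Fin 2 → ℝ) → ℤ ×ₗ ℝ, IsObs 1 z →
        (∀ s t : ℝ, IsGLB ({x' (Set.Iio s), y' (Set.Iio t)} : Set (ℤ ×ₗ ℝ))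
          (z {p | p 0 < s ∧ p 1 < t})) →
        ∃ A B : Set ℝ, MeasurableSet A ∧ MeasurableSet B ∧
          ∃ mAB : ℤ ×ₗ ℝ, IsGLB ({x' A, y' B} : Set (ℤ ×ₗ ℝ)) mAB ∧
            z {p | p 0 ∈ A ∧ p 1 ∈ B} < mAB) := by
  have : IsOrderedAddMonoid G :=
    { add_le_add_left := fun a b h c => by simpa only [add_comm _ c] using add_le_add_left h c }
  exact ⟨fun i _ hA => IsMeetJoint.apply_preimage_eval hmeet hxs hx i hA,
    fun _ hA => IsMeetJoint.apply_pi_le hmeet hxs hx hA, exists_isObs_pair_apply_prod_lt_meet⟩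

open Paper in
/-- properties of the `n`-dimensional meet joint observable `x` of
one-dimensional observables `x₁,…,xₙ` on the perfect MV-algebra `Γ(ℤ ×ₗ G,(1,0))`:
(1) its marginals are the `xᵢ`'s; (2) `x(A₁ × ⋯ × Aₙ)` is below each `xᵢ(Aᵢ)` (hence
below their meet); moreover, for `G = ℝ` the inequality in (2) can be strict. -/
theorem statement_18 {G : Type*} [AddCommGroup G] [Lattice G]
    [CovariantClass G G (· + ·) (· ≤ ·)]
    (hsc : DedekindSC G)
    {n : ℕ} (hn : 1 ≤ n)
    (xs : Fin n → Set ℝ → ℤ ×ₗ G) (hxs : ∀ i, IsObs 1 (xs i))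
    (x : Set (Fin n → ℝ) → ℤ ×ₗ G) (hx : IsObs 1 x)
    (hmeet : ∀ t : Fin n → ℝ,
      IsGLB (Set.range fun i => xs i (Set.Iio (t i))) (x {s | ∀ i, s i < t i})) :
    -- (1) the marginals of `x` are the `xᵢ`'s
    (∀ (i : Fin n) (A : Set ℝ), MeasurableSet A →
      x ((fun s : Fin n → ℝ => s i) ⁻¹' A) = xs i A) ∧
    -- (2) `x(A₁ × ⋯ × Aₙ) ≤ xᵢ(Aᵢ)` for each `i`, i.e. `x(A₁ × ⋯ × Aₙ)` is below the meet
    (∀ A : Fin n → Set ℝ, (∀ i, MeasurableSet (A i)) →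
      ∀ i : Fin n, x {s | ∀ j, s j ∈ A j} ≤ xs i (A i)) ∧
    -- moreover, the inequality can be strict: a concrete example over `G = ℝ`
    (∃ x' y' : Set ℝ → ℤ ×ₗ ℝ, IsObs 1 x' ∧ IsObs 1 y' ∧
      x' {(2 : ℝ)} = toLex (0, 3) ∧ x' {(3 : ℝ)} = toLex (1, -3) ∧
      y' {(1 : ℝ)} = toLex (0, 4) ∧ y' {(5 : ℝ)} = toLex (1, -4) ∧
      ∀ z : Set (Fin 2 → ℝ) → ℤ ×ₗ ℝ, IsObs 1 z →
        (∀ s t : ℝ, IsGLB ({x' (Set.Iio s), y' (Set.Iio t)} : Set (ℤ ×ₗ ℝ))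
          (z {p | p 0 < s ∧ p 1 < t})) →
        ∃ A B : Set ℝ, MeasurableSet A ∧ MeasurableSet B ∧
          ∃ mAB : ℤ ×ₗ ℝ, IsGLB ({x' A, y' B} : Set (ℤ ×ₗ ℝ)) mAB ∧
            z {p | p 0 ∈ A ∧ p 1 ∈ B} < mAB) :=
  statement_18_general xs hxs x hx hmeet
end
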